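/- arXiv:1302.0924 — 3 statements merged into one kernel-verified Lean document; each statement's English description precedes it below -/
import Mathlib

section
/- Let {P_θ : θ ∈ Θ} be a family of probability measures on a measurable space (𝒳, 𝒜). Suppose ℬ ⊆ 𝒜 is an ancillary sub-σ-algebra (i.e., P_θ(B) is constant in θ for every B ∈ ℬ), 𝒞 ⊆ 𝒜 is a sub-σ-algebra such that ℬ and 𝒞 are independent under P_θ for every θ ∈ Θ, and the σ-algebra generated by 𝒞 ∪ ℬ equals 𝒜. Then 𝒞 is sufficient for the family: for every A ∈ 𝒜 there exists a 𝒞-measurable function φ_A (not depending on θ) such that φ_A is a version of the conditional expectation E_θ[1_A | 𝒞] under P_θ for every θ ∈ Θ. -/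
/-!
The sets `A` for which a single `mC`-measurable function is a version of every conditional
expectation `E_θ[1_A | mC]` form a Dynkin system. It contains the π-system of intersections
`B ∩ C` with `B ∈ mB`, `C ∈ mC`, which generates `mB ⊔ mC`: by independence `P_θ(B) 1_C` is a
version of `E_θ[1_{B ∩ C} | mC]`, and by ancillarity it does not depend on `θ`. We work with the
Lebesgue conditional expectation `condLExp`, for which complements and countable disjoint unions
are additive identities in `ℝ≥0∞`, and pass to the real one with `toReal` at the end.
-/

open MeasureTheory ProbabilityTheory Set Function Filter
open scoped ENNReal

theorem IsPiSystem.image2_inter {α : Type*} {S T : Set (Set α)} (hS : IsPiSystem S)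
    (hT : IsPiSystem T) : IsPiSystem (image2 (· ∩ ·) S T) := by
  rintro _ ⟨s₁, hs₁, t₁, ht₁, rfl⟩ _ ⟨s₂, hs₂, t₂, ht₂, rfl⟩ hne
  rw [inter_inter_inter_comm] at hne ⊢
  exact mem_image2_of_mem (hS _ hs₁ _ hs₂ hne.left) (hT _ ht₁ _ ht₂ hne.right)

theorem MeasurableSpace.sup_eq_generateFrom_image2_inter {α : Type*} (m₁ m₂ : MeasurableSpace α) :
    m₁ ⊔ m₂ =
      generateFrom (image2 (· ∩ ·) {s | MeasurableSet[m₁] s} {t | MeasurableSet[m₂] t}) := by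
  refine le_antisymm (sup_le ?_ ?_) (generateFrom_le ?_)
  · exact fun s hs => measurableSet_generateFrom ⟨s, hs, univ, .univ, inter_univ s⟩
  · exact fun t ht => measurableSet_generateFrom ⟨univ, .univ, t, ht, univ_inter t⟩
  · rintro _ ⟨s, hs, t, ht, rfl⟩
    exact (le_sup_left (b := m₂) s hs).inter (le_sup_right (a := m₁) t ht)

theorem Set.indicator_iUnion_eq_tsum {α ι : Type*} {f : ι → Set α}
    (hf : Pairwise (Disjoint on f)) (g : α → ℝ≥0∞) :
    (⋃ i, f i).indicator g = ∑' i, (f i).indicator g := by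
  ext x
  rw [ENNReal.tsum_apply]
  by_cases hx : x ∈ ⋃ i, f i
  · obtain ⟨j, hj⟩ := mem_iUnion.1 hx
    rw [indicator_of_mem hx, tsum_eq_single j fun i hij =>
      indicator_of_notMem (disjoint_right.1 (hf hij) hj) _, indicator_of_mem hj]
  · simp_all

namespace MeasureTheory

variable {Ω : Type*} {m m₀ : MeasurableSpace Ω} {μ : Measure[m₀] Ω}

theorem condLExp_indicator_compl [IsFiniteMeasure μ] (hm : m ≤ m₀) {A : Set Ω}
    (hA : MeasurableSet[m₀] A) :
    μ⁻[Aᶜ.indicator 1|m] =ᵐ[μ] 1 - μ⁻[A.indicator 1|m] := by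
  have hsum : μ⁻[Aᶜ.indicator 1|m] + μ⁻[A.indicator 1|m] =ᵐ[μ] 1 := by
    have h := condLExp_add_left (mΩ := m) (A.indicator 1)
      (measurable_one.indicator hA.compl).aemeasurable (P := μ)
    rw [indicator_compl_add_self, condLExp_one hm] at h
    exact h.symm
  have hfin : ∫⁻ x, A.indicator 1 x ∂μ ≠ ∞ := by
    rw [lintegral_indicator_one hA]; exact measure_ne_top μ A
  filter_upwards [hsum, condLExp_lt_top (mΩ := m) hfin] with x hx hx_lt
  exact ENNReal.eq_sub_of_add_eq hx_lt.ne hx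

theorem condLExp_indicator_iUnion {f : ℕ → Set Ω} (hf : Pairwise (Disjoint on f))
    (hfm : ∀ i, MeasurableSet[m₀] (f i)) :
    μ⁻[(⋃ i, f i).indicator 1|m] =ᵐ[μ] ∑' i, μ⁻[(f i).indicator 1|m] := by
  rw [indicator_iUnion_eq_tsum hf]
  exact condLExp_tsum m fun i => (measurable_one.indicator (hfm i)).aemeasurable

theorem indicator_ae_eq_condLExp_indicator_inter_of_indep {mB mC : MeasurableSpace Ω}
    [IsFiniteMeasure μ] (hB : mB ≤ m₀) (hC : mC ≤ m₀) (hind : Indep mB mC μ) {B C : Set Ω}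
    (hBm : MeasurableSet[mB] B) (hCm : MeasurableSet[mC] C) :
    C.indicator (fun _ => μ B) =ᵐ[μ] μ⁻[(B ∩ C).indicator 1|mC] := by
  refine ae_eq_condLExp hC μ _ (measurable_const.indicator hCm) fun t ht => ?_
  rw [lintegral_indicator_const (hC C hCm), lintegral_indicator_one ((hB B hBm).inter (hC C hCm)),
    Measure.restrict_apply' (hC t ht), Measure.restrict_apply' (hC t ht), inter_assoc,
    (Indep_iff mB mC μ).1 hind B (C ∩ t) hBm (hCm.inter ht)]

theorem toReal_condLExp_indicator_one [IsFiniteMeasure μ] {A : Set Ω}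
    (hA : MeasurableSet[m₀] A) :
    (fun x => (μ⁻[A.indicator 1|m] x).toReal) =ᵐ[μ] μ[A.indicator (fun _ => (1 : ℝ))|m] := by
  have hA_toReal : (fun x => (A.indicator (1 : Ω → ℝ≥0∞) x).toReal) = A.indicator fun _ => 1 := by
    ext x; by_cases hx : x ∈ A <;> simp [hx]
  rw [← hA_toReal]
  refine toReal_condLExp m (measurable_one.indicator hA).aemeasurable ?_
  rw [lintegral_indicator_one hA]; exact measure_ne_top μ A

end MeasureTheory

theorem exists_measurable_ae_eq_condLExp_indicator_of_indep_of_ancillary {X Θ : Type*}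
    {mA : MeasurableSpace X} (P : Θ → Measure X) [∀ θ, IsFiniteMeasure (P θ)]
    (mB mC : MeasurableSpace X)
    (hanc : ∀ B : Set X, MeasurableSet[mB] B → ∀ θ θ' : Θ, P θ B = P θ' B)
    (hindep : ∀ θ : Θ, Indep mB mC (P θ)) (hgen : mB ⊔ mC = mA) :
    ∀ A : Set X, MeasurableSet[mA] A →
      ∃ φ : X → ℝ≥0∞, Measurable[mC] φ ∧ ∀ θ, φ =ᵐ[P θ] (P θ)⁻[A.indicator 1|mC] := by
  have hB : mB ≤ mA := hgen ▸ le_sup_left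
  have hC : mC ≤ mA := hgen ▸ le_sup_right
  refine MeasurableSpace.induction_on_inter
    (hgen.symm.trans (MeasurableSpace.sup_eq_generateFrom_image2_inter mB mC))
    ((@MeasurableSpace.isPiSystem_measurableSet X mB).image2_inter
      (@MeasurableSpace.isPiSystem_measurableSet X mC)) ?_ ?_ ?_ ?_
  · exact ⟨0, measurable_const, fun θ => by rw [indicator_empty', condLExp_zero]⟩
  · rintro _ ⟨B, hBm, C, hCm, rfl⟩
    obtain ⟨c, hc⟩ : ∃ c, ∀ θ, P θ B = c := by
      rcases isEmpty_or_nonempty Θ with hΘ | ⟨⟨θ₀⟩⟩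
      · exact ⟨0, isEmptyElim⟩
      · exact ⟨P θ₀ B, fun θ => hanc B hBm θ θ₀⟩
    refine ⟨C.indicator fun _ => c, measurable_const.indicator hCm, fun θ => ?_⟩
    exact hc θ ▸ indicator_ae_eq_condLExp_indicator_inter_of_indep hB hC (hindep θ) hBm hCm
  · rintro A hA ⟨φ, hφm, hφ⟩
    exact ⟨1 - φ, measurable_const.sub hφm, fun θ =>
      ((EventuallyEq.refl _ (1 : X → ℝ≥0∞)).sub (hφ θ)).trans (condLExp_indicator_compl hC hA).symm⟩
  · rintro f hf hfm hφ
    choose φ hφm hφ using hφ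
    refine ⟨∑' i, φ i, Measurable.tsum' hφm, fun θ => ?_⟩
    have hφ_all : ∀ᵐ x ∂P θ, ∀ i, φ i x = (P θ)⁻[(f i).indicator 1|mC] x :=
      ae_all_iff.2 fun i => hφ i θ
    refine EventuallyEq.trans ?_ (condLExp_indicator_iUnion hf hfm).symm
    filter_upwards [hφ_all] with x hx
    simp only [ENNReal.tsum_apply, hx]

theorem sufficiency_of_independent_complement_of_ancillary_general
    {X Θ : Type*} [mA : MeasurableSpace X]
    (P : Θ → Measure X) [∀ θ, IsProbabilityMeasure (P θ)]
    (mB mC : MeasurableSpace X)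
    (hanc : ∀ B : Set X, MeasurableSet[mB] B → ∀ θ θ' : Θ, P θ B = P θ' B)
    (hindep : ∀ θ : Θ, Indep mB mC (P θ))
    (hgen : mB ⊔ mC = mA) :
    ∀ A : Set X, MeasurableSet[mA] A →
      ∃ φ : X → ℝ, StronglyMeasurable[mC] φ ∧
        ∀ θ : Θ, φ =ᵐ[P θ] (P θ)[Set.indicator A (fun _ => (1 : ℝ)) | mC] := by
  intro A hA
  have : ∀ θ, IsFiniteMeasure (P θ) := fun θ => inferInstance
  obtain ⟨φ, hφm, hφ⟩ :=
    exists_measurable_ae_eq_condLExp_indicator_of_indep_of_ancillary P mB mC hanc hindep hgen A hA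
  refine ⟨fun x => (φ x).toReal, hφm.ennreal_toReal.stronglyMeasurable, fun θ => ?_⟩
  exact ((hφ θ).fun_comp ENNReal.toReal).trans (toReal_condLExp_indicator_one hA)

/-- If `mB` is an ancillary sub-σ-algebra, `mC` is a sub-σ-algebra independent of
`mB` under every `P θ`, and together they generate the full σ-algebra, then `mC` is sufficient:
every indicator `1_A` admits a single `mC`-measurable version of its conditional expectation,
valid simultaneously for all `θ`. -/
theorem sufficiency_of_independent_complement_of_ancillary
    {X Θ : Type*} [mA : MeasurableSpace X]
    (P : Θ → Measure X) [∀ θ, IsProbabilityMeasure (P θ)]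
    (mB mC : MeasurableSpace X) (hB : mB ≤ mA) (hC : mC ≤ mA)
    (hanc : ∀ B : Set X, MeasurableSet[mB] B → ∀ θ θ' : Θ, P θ B = P θ' B)
    (hindep : ∀ θ : Θ, Indep mB mC (P θ))
    (hgen : mB ⊔ mC = mA) :
    ∀ A : Set X, MeasurableSet[mA] A →
      ∃ φ : X → ℝ, StronglyMeasurable[mC] φ ∧
        ∀ θ : Θ, φ =ᵐ[P θ] (P θ)[Set.indicator A (fun _ => (1 : ℝ)) | mC] :=
  sufficiency_of_independent_complement_of_ancillary_general (mA := mA) P mB mC hanc hindep hgen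
end

section
/- Let {P_θ : θ ∈ Θ} be a family of probability measures on (𝒳, 𝒜), let W be an ancillary statistic, and let g be a real-valued statistic such that: (i) E_θ|g|^k < ∞ for all integers k ≥ 1 and all θ; (ii) for every θ, polynomials in g are dense in L²(P_θ ∘ g⁻¹); and (iii) for every statistic U with E_θ U = 0 and E_θ U² < ∞ for all θ, E_θ(gU) = 0 for all θ (g is a UMVUE). Then g and W are independent under P_θ for every θ ∈ Θ, i.e., the joint law of (g, W) under P_θ equals the product of the laws of g and of W under P_θ. -/
/-! Fix a measurable set `B`. By ancillarity `U = 1_B(W) - P(W ∈ B)` has mean zero under every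
`P θ`, and it is bounded. A UMVUE `g` is uncorrelated with every square-integrable unbiased
estimator `V` of zero, so `g * V` is again one as long as it is square integrable; by induction
every `g ^ k * U` has mean zero, hence so does `p(g) * U` for every polynomial `p`. By
Cauchy–Schwarz `φ ↦ E[φ(g) U]` is continuous on `L²` of the law of `g`, so density of polynomials
gives `E[1_A(g) U] = 0`, which is `P(g ∈ A, W ∈ B) = P(g ∈ A) P(W ∈ B)`. -/

open MeasureTheory ProbabilityTheory
open scoped ENNReal

noncomputable section

section Moments

variable {X : Type*} [MeasurableSpace X] {μ : Measure X}

theorem memLp_pow_of_memLp_mul {f : X → ℝ} {p : ℝ≥0∞} {k : ℕ} (hk : k ≠ 0)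
    (hf : MemLp f (p * k) μ) : MemLp (fun x => f x ^ k) p μ := by
  have h := hf.norm_rpow_div k
  rw [ENNReal.mul_div_cancel_right (by exact_mod_cast hk) (ENNReal.natCast_ne_top k)] at h
  refine (memLp_norm_iff (hf.aestronglyMeasurable.pow k)).mp ?_
  simpa [norm_pow] using h

theorem memLp_two_pow_of_forall_memLp [IsFiniteMeasure μ] {f : X → ℝ}
    (hmom : ∀ k : ℕ, 1 ≤ k → MemLp f k μ) (k : ℕ) : MemLp (fun x => f x ^ k) 2 μ := by
  rcases k with _ | k
  · simpa using memLp_const (1 : ℝ)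
  · refine memLp_pow_of_memLp_mul k.succ_ne_zero ?_
    simpa using hmom (2 * (k + 1)) (by omega)

end Moments

section Approximation

variable {X : Type*} [MeasurableSpace X] {μ : Measure X} {g : X → ℝ} {U : X → ℝ}

theorem enorm_integral_comp_mul_le (hg : AEMeasurable g μ) {φ : ℝ → ℝ}
    (hφ : AEStronglyMeasurable φ (μ.map g)) (hU : AEStronglyMeasurable U μ) :
    ‖∫ x, φ (g x) * U x ∂μ‖ₑ ≤ eLpNorm φ 2 (μ.map g) * eLpNorm U 2 μ := calc
  ‖∫ x, φ (g x) * U x ∂μ‖ₑ ≤ eLpNorm ((φ ∘ g) • U) 1 μ :=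
    (enorm_integral_le_lintegral_enorm _).trans_eq eLpNorm_one_eq_lintegral_enorm.symm
  _ ≤ eLpNorm (φ ∘ g) 2 μ * eLpNorm U 2 μ :=
    eLpNorm_smul_le_mul_eLpNorm hU (hφ.comp_aemeasurable hg)
  _ = eLpNorm φ 2 (μ.map g) * eLpNorm U 2 μ := by rw [eLpNorm_map_measure hφ hg]

theorem integral_comp_mul_eq_zero_of_forall_approx (hg : AEMeasurable g μ) (hU : MemLp U 2 μ)
    {φ : ℝ → ℝ} (hφ : MemLp φ 2 (μ.map g))
    (happrox : ∀ ε : ℝ, 0 < ε → ∃ ψ : ℝ → ℝ, MemLp ψ 2 (μ.map g) ∧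
      ∫ x, ψ (g x) * U x ∂μ = 0 ∧ eLpNorm (φ - ψ) 2 (μ.map g) < ENNReal.ofReal ε) :
    ∫ x, φ (g x) * U x ∂μ = 0 := by
  set I := ∫ x, φ (g x) * U x ∂μ
  set M := (eLpNorm U 2 μ).toReal
  have hbound : ∀ ε : ℝ, 0 < ε → |I| ≤ ε * M := by
    intro ε hε
    obtain ⟨ψ, hψ, hψU, hφψ⟩ := happrox ε hε
    have hintegrable {χ : ℝ → ℝ} (hχ : MemLp χ 2 (μ.map g)) :
        Integrable (fun x => χ (g x) * U x) μ :=
      ((memLp_map_measure_iff hχ.1 hg).mp hχ).integrable_mul hU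
    have hsub : ∫ x, (φ - ψ) (g x) * U x ∂μ = I := by
      simp only [Pi.sub_apply, sub_mul]
      rw [integral_sub (hintegrable hφ) (hintegrable hψ), hψU, sub_zero]
    calc |I| = (‖∫ x, (φ - ψ) (g x) * U x ∂μ‖ₑ).toReal := by
          rw [hsub, toReal_enorm, Real.norm_eq_abs]
      _ ≤ (ENNReal.ofReal ε * eLpNorm U 2 μ).toReal :=
        ENNReal.toReal_mono (ENNReal.mul_ne_top ENNReal.ofReal_ne_top hU.eLpNorm_ne_top)
          ((enorm_integral_comp_mul_le hg (hφ.1.sub hψ.1) hU.1).trans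
            (mul_le_mul_left hφψ.le _))
      _ = ε * M := by rw [ENNReal.toReal_mul, ENNReal.toReal_ofReal hε.le]
  refine abs_nonpos_iff.mp (le_of_forall_pos_le_add fun δ hδ => ?_)
  have hM : 0 ≤ M := ENNReal.toReal_nonneg
  calc |I| ≤ δ / (M + 1) * M := hbound _ (by positivity)
    _ ≤ 0 + δ := by
      rw [zero_add, div_mul_eq_mul_div, div_le_iff₀ (by positivity)]
      nlinarith

end Approximation

section Polynomial

variable {X : Type*} [MeasurableSpace X] {μ : Measure X} {g : X → ℝ}

theorem memLp_eval_comp (hpow : ∀ k : ℕ, MemLp (fun x => g x ^ k) 2 μ) (p : Polynomial ℝ) :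
    MemLp (fun x => p.eval (g x)) 2 μ := by
  induction p using Polynomial.induction_on' with
  | add p q hp hq =>
    simp only [Polynomial.eval_add]
    exact hp.add hq
  | monomial n a => simpa only [Polynomial.eval_monomial] using (hpow n).const_mul a

theorem integral_eval_comp_mul_eq_zero (hpow : ∀ k : ℕ, MemLp (fun x => g x ^ k) 2 μ)
    {U : X → ℝ} (hU : MemLp U 2 μ) (horth : ∀ k : ℕ, ∫ x, g x ^ k * U x ∂μ = 0)
    (p : Polynomial ℝ) : ∫ x, p.eval (g x) * U x ∂μ = 0 := by
  have hint (p : Polynomial ℝ) : Integrable (fun x => p.eval (g x) * U x) μ :=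
    (memLp_eval_comp hpow p).integrable_mul hU
  induction p using Polynomial.induction_on' with
  | add p q hp hq =>
    simp only [Polynomial.eval_add, add_mul]
    rw [integral_add (hint p) (hint q), hp, hq, add_zero]
  | monomial n a =>
    simp only [Polynomial.eval_monomial, mul_assoc]
    rw [integral_const_mul, horth, mul_zero]

end Polynomial

section Estimators

variable {X Θ : Type*} [MeasurableSpace X]

structure IsUnbiasedEstimatorOfZero (P : Θ → Measure X) (U : X → ℝ) : Prop where
  measurable : Measurable U
  memLp : ∀ θ, MemLp U 2 (P θ)
  integral_eq_zero : ∀ θ, ∫ x, U x ∂(P θ) = 0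

variable {P : Θ → Measure X} {g U : X → ℝ}

theorem IsUnbiasedEstimatorOfZero.mul
    (hg_orth : ∀ V, IsUnbiasedEstimatorOfZero P V → ∀ θ, ∫ x, g x * V x ∂(P θ) = 0)
    (hg : Measurable g) (hU : IsUnbiasedEstimatorOfZero P U)
    (hgU : ∀ θ, MemLp (fun x => g x * U x) 2 (P θ)) :
    IsUnbiasedEstimatorOfZero P (fun x => g x * U x) :=
  ⟨hg.mul hU.measurable, hgU, hg_orth U hU⟩

theorem IsUnbiasedEstimatorOfZero.pow_mul
    (hg_orth : ∀ V, IsUnbiasedEstimatorOfZero P V → ∀ θ, ∫ x, g x * V x ∂(P θ) = 0)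
    (hg : Measurable g) (hpow : ∀ k θ, MemLp (fun x => g x ^ k) 2 (P θ))
    (hU : IsUnbiasedEstimatorOfZero P U) (hU_bdd : ∀ θ, MemLp U ∞ (P θ)) (k : ℕ) :
    IsUnbiasedEstimatorOfZero P (fun x => g x ^ k * U x) := by
  induction k with
  | zero => simpa only [pow_zero, one_mul] using hU
  | succ k ih =>
    have hmem θ : MemLp (fun x => g x ^ (k + 1) * U x) 2 (P θ) :=
      (hU_bdd θ).mul' (hpow (k + 1) θ)
    simp_rw [pow_succ', mul_assoc] at hmem ⊢
    exact ih.mul hg_orth hg hmem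

variable [∀ θ, IsProbabilityMeasure (P θ)]

theorem isUnbiasedEstimatorOfZero_indicator_sub {𝒲 : Type*} [MeasurableSpace 𝒲] {W : X → 𝒲}
    (hW : Measurable W) (hanc : ∀ θ θ', (P θ).map W = (P θ').map W) {B : Set 𝒲}
    (hB : MeasurableSet B) (θ₀ : Θ) :
    IsUnbiasedEstimatorOfZero P
      (fun x => (W ⁻¹' B).indicator 1 x - (P θ₀).real (W ⁻¹' B)) := by
  refine ⟨(measurable_one.indicator (hW hB)).sub measurable_const,
    fun θ => ((memLp_const (1 : ℝ)).indicator (hW hB)).sub (memLp_const _), fun θ => ?_⟩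
  have h1 : Integrable ((W ⁻¹' B).indicator 1) (P θ) :=
    (integrable_const (1 : ℝ)).indicator (hW hB)
  rw [integral_sub h1 (integrable_const _), integral_indicator_one (hW hB), integral_const]
  simp [← map_measureReal_apply hW hB, hanc θ θ₀]

end Estimators

theorem measure_inter_eq_mul_of_integral_indicator_mul_sub_eq_zero {X : Type*}
    [MeasurableSpace X] {μ : Measure X} [IsFiniteMeasure μ] {s t : Set X} (hs : MeasurableSet s)
    (ht : MeasurableSet t) (h : ∫ x, s.indicator 1 x * (t.indicator 1 x - μ.real t) ∂μ = 0) :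
    μ (s ∩ t) = μ s * μ t := by
  have hs1 : Integrable (s.indicator (1 : X → ℝ)) μ := (integrable_const (1 : ℝ)).indicator hs
  have hst1 : Integrable ((s ∩ t).indicator (1 : X → ℝ)) μ :=
    (integrable_const (1 : ℝ)).indicator (hs.inter ht)
  simp only [mul_sub, ← Pi.mul_apply (s.indicator 1), ← Set.inter_indicator_one] at h
  rw [integral_sub hst1 (hs1.mul_const _), integral_mul_const, integral_indicator_one hs,
    integral_indicator_one (hs.inter ht), sub_eq_zero] at h
  rw [← ENNReal.toReal_eq_toReal_iff' (measure_ne_top _ _)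
    (ENNReal.mul_ne_top (measure_ne_top _ _) (measure_ne_top _ _)), ENNReal.toReal_mul]
  simpa only [measureReal_def] using h

/-- If `W` is ancillary, `g` has all moments finite, polynomials in `g` are
dense in `L²` of the law of `g`, and `g` is uncorrelated with every square-integrable unbiased
estimator of zero (i.e. `g` is a UMVUE), then `g` and `W` are independent under every `P θ`. -/
theorem UMVUE_indep_ancillary {X Θ 𝒲 : Type*} [MeasurableSpace X] [MeasurableSpace 𝒲]
    (P : Θ → Measure X) [∀ θ, IsProbabilityMeasure (P θ)]
    (W : X → 𝒲) (hW : Measurable W)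
    (hanc : ∀ θ θ' : Θ, Measure.map W (P θ) = Measure.map W (P θ'))
    (g : X → ℝ) (hg : Measurable g)
    (hmom : ∀ k : ℕ, 1 ≤ k → ∀ θ : Θ, MemLp g (k : ℝ≥0∞) (P θ))
    (hdense : ∀ θ : Θ, ∀ φ : ℝ → ℝ, MemLp φ 2 (Measure.map g (P θ)) →
      ∀ ε : ℝ, 0 < ε → ∃ p : Polynomial ℝ,
        eLpNorm (fun u => φ u - p.eval u) 2 (Measure.map g (P θ)) < ENNReal.ofReal ε)
    (huncorr : ∀ U : X → ℝ, Measurable U → (∀ θ : Θ, MemLp U 2 (P θ)) →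
      (∀ θ : Θ, ∫ x, U x ∂(P θ) = 0) → ∀ θ : Θ, ∫ x, g x * U x ∂(P θ) = 0) :
    ∀ θ : Θ, Measure.map (fun x => (g x, W x)) (P θ) =
      (Measure.map g (P θ)).prod (Measure.map W (P θ)) := by
  intro θ
  rw [← indepFun_iff_map_prod_eq_prod_map_map hg.aemeasurable hW.aemeasurable,
    indepFun_iff_measure_inter_preimage_eq_mul]
  intro A B hA hB
  have hpow k θ' : MemLp (fun x => g x ^ k) 2 (P θ') :=
    memLp_two_pow_of_forall_memLp (fun k hk => hmom k hk θ') k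
  have hU := isUnbiasedEstimatorOfZero_indicator_sub hW hanc hB θ
  have hU_bdd θ' : MemLp (fun x => (W ⁻¹' B).indicator 1 x - (P θ).real (W ⁻¹' B)) ∞ (P θ') :=
    ((memLp_top_const (1 : ℝ)).indicator (hW hB)).sub (memLp_top_const _)
  have hg_orth V (hV : IsUnbiasedEstimatorOfZero P V) :=
    huncorr V hV.measurable hV.memLp hV.integral_eq_zero
  have horth k := (hU.pow_mul hg_orth hg hpow hU_bdd k).integral_eq_zero θ
  have hφ : MemLp (A.indicator 1) 2 ((P θ).map g) := (memLp_const (1 : ℝ)).indicator hA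
  refine measure_inter_eq_mul_of_integral_indicator_mul_sub_eq_zero (hg hA) (hW hB)
    (integral_comp_mul_eq_zero_of_forall_approx hg.aemeasurable (hU.memLp θ) hφ fun ε hε => ?_)
  obtain ⟨p, hp⟩ := hdense θ _ hφ ε hε
  have hp_memLp : MemLp (fun u => p.eval u) 2 ((P θ).map g) :=
    (memLp_map_measure_iff p.continuous.aestronglyMeasurable hg.aemeasurable).mpr
      (memLp_eval_comp (hpow · θ) p)
  exact ⟨_, hp_memLp, integral_eval_comp_mul_eq_zero (hpow · θ) (hU.memLp θ) horth p, hp⟩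
end
end

section
/- Let A ⊆ ℝ² be a Lebesgue-measurable set with finite Lebesgue measure λ(A) < ∞. If the function ρ ↦ ∬_A φ(x, y; ρ) dx dy is constant on (−1, 1), where φ(x, y; ρ) = (1/(2π√(1−ρ²))) exp(−(x² + y² − 2ρxy)/(2(1−ρ²))), then λ(A) = 0. -/
/-!
Extend `ρ ↦ φ(·, ·; ρ)` holomorphically to the strip `|Re z| < 1`. In partial fractions,
`(x² + y² − 2ρxy) / (2(1 − ρ²)) = (x + y)² / (4(1 + ρ)) + (x − y)² / (4(1 − ρ))`,
and both fractions have nonnegative real part on the strip, so the extension is bounded by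
`(2π)⁻¹ |1 − z²|^(-1/2)`. Hence `z ↦ ∬_A φ(x, y; z)` is holomorphic on the strip; being
constant on `(−1, 1)`, it is constant on the strip, and it tends to `0` along the imaginary axis.
So `∬_A φ(x, y; 0) = 0`, which forces `λ(A) = 0` because `φ(·, ·; 0) > 0`.
-/

open MeasureTheory
open scoped ENNReal

noncomputable section

/-- The standardized bivariate normal density with correlation `ρ`. -/
def biGaussDensity (ρ : ℝ) (p : ℝ × ℝ) : ℝ :=
  (1 / (2 * Real.pi * Real.sqrt (1 - ρ ^ 2))) *
    Real.exp (-((p.1 ^ 2 + p.2 ^ 2 - 2 * ρ * p.1 * p.2) / (2 * (1 - ρ ^ 2))))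

open Complex Filter Topology Set Metric

theorem Complex.differentiableAt_integral_of_dominated_loc {α E : Type*} [MeasurableSpace α]
    {μ : Measure α} [NormedAddCommGroup E] [NormedSpace ℂ E] [CompleteSpace E]
    {F : ℂ → α → E} {z₀ : ℂ} {bound : α → ℝ}
    (hF_meas : ∀ z, AEStronglyMeasurable (F z) μ)
    (hF_diff : ∀ᶠ z in 𝓝 z₀, ∀ a, DifferentiableAt ℂ (F · a) z)
    (h_bound : ∀ᶠ z in 𝓝 z₀, ∀ a, ‖F z a‖ ≤ bound a)
    (bound_integrable : Integrable bound μ) :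
    DifferentiableAt ℂ (fun z => ∫ a, F z a ∂μ) z₀ := by
  obtain ⟨r, hr, hball⟩ := eventually_nhds_iff_ball.1 (hF_diff.and h_bound)
  -- Cauchy's estimate bounds the derivative on the half ball by the integrable `bound`.
  have hderiv_le : ∀ a, ∀ z ∈ ball z₀ (r / 2), ‖deriv (F · a) z‖ ≤ bound a / (r / 2) := by
    intro a z hz
    have hsub : closedBall z (r / 2) ⊆ ball z₀ r :=
      closedBall_subset_ball' (by linarith [mem_ball.1 hz])
    exact Complex.norm_deriv_le_of_forall_mem_sphere_norm_le (half_pos hr)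
      (DifferentiableOn.diffContOnCl_ball
        (fun w hw => ((hball w hw).1 a).differentiableWithinAt) hsub)
      fun w hw => (hball w (hsub (sphere_subset_closedBall hw))).2 a
  have hderiv_meas : AEStronglyMeasurable (fun a => deriv (F · a) z₀) μ :=
    aestronglyMeasurable_of_tendsto_ae (𝓝[≠] z₀)
      (fun w => by
        simpa only [slope, vsub_eq_sub, Pi.smul_def, Pi.sub_def] using
          ((hF_meas w).sub (hF_meas z₀)).const_smul (w - z₀)⁻¹)
      (ae_of_all _ fun a => ((hball z₀ (mem_ball_self hr)).1 a).hasDerivAt.tendsto_slope)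
  exact (hasDerivAt_integral_of_dominated_loc_of_deriv_le (ball_mem_nhds z₀ (half_pos hr))
    (Eventually.of_forall hF_meas)
    (bound_integrable.mono' (hF_meas z₀) (ae_of_all _ (hball z₀ (mem_ball_self hr)).2))
    hderiv_meas (ae_of_all _ hderiv_le) (bound_integrable.div_const _)
    (ae_of_all _ fun a z hz =>
      ((hball z (ball_subset_ball (half_le_self hr.le) hz)).1 a).hasDerivAt)).2.differentiableAt

theorem Real.exp_neg_log_div_two {x : ℝ} (hx : 0 < x) :
    Real.exp (-(Real.log x / 2)) = (√x)⁻¹ := by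
  rw [← Real.log_sqrt hx.le, Real.exp_neg, Real.exp_log (Real.sqrt_pos.2 hx)]

theorem Complex.re_ofReal_div_nonneg {q : ℝ} {w : ℂ} (hq : 0 ≤ q) (hw : 0 ≤ w.re) :
    0 ≤ ((q : ℂ) / w).re := by
  rw [div_re, ofReal_re, ofReal_im, zero_mul, zero_div, add_zero]
  exact div_nonneg (mul_nonneg hq hw) (normSq_nonneg w)

def complexBiGaussDensity (z : ℂ) (p : ℝ × ℝ) : ℂ :=
  (2 * Real.pi : ℂ)⁻¹ * exp (-(log (1 - z ^ 2) / 2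
    + (((p.1 + p.2) ^ 2 : ℝ) : ℂ) / (4 * (1 + z))
    + (((p.1 - p.2) ^ 2 : ℝ) : ℂ) / (4 * (1 - z))))

theorem complexBiGaussDensity_ofReal {ρ : ℝ} (hρ : ρ ∈ Ioo (-1 : ℝ) 1) (p : ℝ × ℝ) :
    complexBiGaussDensity ρ p = biGaussDensity ρ p := by
  obtain ⟨hρ₁, hρ₂⟩ := hρ
  have hpos : 0 < 1 - ρ ^ 2 := by nlinarith
  have hquad : (p.1 + p.2) ^ 2 / (4 * (1 + ρ)) + (p.1 - p.2) ^ 2 / (4 * (1 - ρ))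
      = (p.1 ^ 2 + p.2 ^ 2 - 2 * ρ * p.1 * p.2) / (2 * (1 - ρ ^ 2)) := by
    have : 1 + ρ ≠ 0 := by linarith
    have : 1 - ρ ≠ 0 := by linarith
    field_simp
    ring
  have hlog : log (1 - (ρ : ℂ) ^ 2) = (Real.log (1 - ρ ^ 2) : ℂ) := by
    rw [ofReal_log hpos.le]; push_cast; rfl
  have harg : -(log (1 - (ρ : ℂ) ^ 2) / 2 + (((p.1 + p.2) ^ 2 : ℝ) : ℂ) / (4 * (1 + ρ))
      + (((p.1 - p.2) ^ 2 : ℝ) : ℂ) / (4 * (1 - ρ)))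
      = ((-(Real.log (1 - ρ ^ 2) / 2)
        + -((p.1 ^ 2 + p.2 ^ 2 - 2 * ρ * p.1 * p.2) / (2 * (1 - ρ ^ 2))) : ℝ) : ℂ) := by
    rw [hlog, ← hquad]; push_cast; ring
  rw [complexBiGaussDensity, biGaussDensity, harg, ← ofReal_exp, Real.exp_add,
    Real.exp_neg_log_div_two hpos]
  push_cast
  ring

section Strip

variable {z : ℂ} (hz : z.re ∈ Ioo (-1 : ℝ) 1)
include hz

theorem re_one_add_pos : 0 < (1 + z).re := by simpa using neg_lt_iff_pos_add'.1 hz.1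

theorem re_one_sub_pos : 0 < (1 - z).re := by simpa using hz.2

theorem one_sub_sq_mem_slitPlane : 1 - z ^ 2 ∈ slitPlane := by
  refine mem_slitPlane_iff.2 (Or.inl ?_)
  have : (1 - z ^ 2).re = 1 - z.re ^ 2 + z.im ^ 2 := by simp [sq]; ring
  nlinarith [hz.1, hz.2, sq_nonneg z.im]

theorem differentiableAt_complexBiGaussDensity (p : ℝ × ℝ) :
    DifferentiableAt ℂ (complexBiGaussDensity · p) z := by
  have h₁ := ne_zero_of_re_pos (re_one_add_pos hz)
  have h₂ := ne_zero_of_re_pos (re_one_sub_pos hz)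
  have h₃ := one_sub_sq_mem_slitPlane hz
  unfold complexBiGaussDensity
  fun_prop (disch := simp_all)

theorem norm_complexBiGaussDensity_le (p : ℝ × ℝ) :
    ‖complexBiGaussDensity z p‖ ≤ (2 * Real.pi)⁻¹ * (√‖1 - z ^ 2‖)⁻¹ := by
  have ha : 0 ≤ ((((p.1 + p.2) ^ 2 : ℝ) : ℂ) / (4 * (1 + z))).re :=
    re_ofReal_div_nonneg (sq_nonneg _) (by simpa using (re_one_add_pos hz).le)
  have hb : 0 ≤ ((((p.1 - p.2) ^ 2 : ℝ) : ℂ) / (4 * (1 - z))).re :=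
    re_ofReal_div_nonneg (sq_nonneg _) (by simpa using (re_one_sub_pos hz).le)
  have hnorm : 0 < ‖1 - z ^ 2‖ :=
    norm_pos_iff.2 (slitPlane_ne_zero (one_sub_sq_mem_slitPlane hz))
  rw [complexBiGaussDensity, norm_mul, norm_exp, ← Real.exp_neg_log_div_two hnorm]
  have h2pi : ‖(2 * Real.pi : ℂ)⁻¹‖ = (2 * Real.pi)⁻¹ := by
    rw [norm_inv, show (2 * Real.pi : ℂ) = ((2 * Real.pi : ℝ) : ℂ) by push_cast; rfl,
      norm_real, Real.norm_of_nonneg Real.two_pi_pos.le]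
  rw [h2pi]
  gcongr
  simp only [neg_re, add_re, div_ofNat_re, log_re] at ha hb ⊢
  linarith

end Strip

theorem continuous_complexBiGaussDensity (z : ℂ) : Continuous (complexBiGaussDensity z) := by
  unfold complexBiGaussDensity
  fun_prop

theorem eventually_norm_complexBiGaussDensity_le {z₀ : ℂ} (hz₀ : z₀.re ∈ Ioo (-1 : ℝ) 1) :
    ∀ᶠ z in 𝓝 z₀, ∀ p, ‖complexBiGaussDensity z p‖
      ≤ (2 * Real.pi)⁻¹ * ((√‖1 - z₀ ^ 2‖)⁻¹ + 1) := by
  have hcont : ContinuousAt (fun z : ℂ => (√‖1 - z ^ 2‖)⁻¹) z₀ :=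
    (by fun_prop : Continuous fun z : ℂ => √‖1 - z ^ 2‖).continuousAt.inv₀
      (Real.sqrt_ne_zero'.2 (norm_pos_iff.2 (slitPlane_ne_zero (one_sub_sq_mem_slitPlane hz₀))))
  filter_upwards [(isOpen_Ioo.preimage continuous_re).mem_nhds hz₀,
    hcont.eventually (gt_mem_nhds (lt_add_one _))] with z hz hlt p
  exact (norm_complexBiGaussDensity_le hz p).trans (by gcongr)

theorem analyticOnNhd_integral_complexBiGaussDensity (μ : Measure (ℝ × ℝ))
    [IsFiniteMeasure μ] :
    AnalyticOnNhd ℂ (fun z => ∫ p, complexBiGaussDensity z p ∂μ) (re ⁻¹' Ioo (-1) 1) := by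
  have hopen : IsOpen (re ⁻¹' Ioo (-1 : ℝ) 1) := isOpen_Ioo.preimage continuous_re
  refine DifferentiableOn.analyticOnNhd (fun z₀ hz₀ => ?_) hopen
  exact (differentiableAt_integral_of_dominated_loc
    (fun z => (continuous_complexBiGaussDensity z).aestronglyMeasurable)
    (eventually_of_mem (hopen.mem_nhds hz₀) fun z hz => differentiableAt_complexBiGaussDensity hz)
    (eventually_norm_complexBiGaussDensity_le hz₀) (integrable_const _)).differentiableWithinAt

theorem tendsto_integral_complexBiGaussDensity_mul_I (μ : Measure (ℝ × ℝ))
    [IsFiniteMeasure μ] :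
    Tendsto (fun t : ℝ => ∫ p, complexBiGaussDensity (t * I) p ∂μ) atTop (𝓝 0) := by
  have hnorm : ∀ t : ℝ, ‖1 - (t * I) ^ 2‖ = 1 + t ^ 2 := fun t => by
    rw [mul_pow, I_sq, show (1 : ℂ) - t ^ 2 * -1 = ((1 + t ^ 2 : ℝ) : ℂ) by push_cast; ring,
      norm_real, Real.norm_of_nonneg (by positivity)]
  have hsqrt : Tendsto (fun t : ℝ => √(1 + t ^ 2)) atTop atTop :=
    Real.tendsto_sqrt_atTop.comp
      (tendsto_atTop_add_const_left _ _ (tendsto_pow_atTop two_ne_zero))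
  refine squeeze_zero_norm (fun t => norm_integral_le_of_norm_le_const (ae_of_all _ fun p =>
    (norm_complexBiGaussDensity_le (z := t * I) (by simp) p).trans_eq (by rw [hnorm]))) ?_
  simpa using (hsqrt.inv_tendsto_atTop.const_mul _).mul_const (μ.real univ)

theorem biGaussDensity_pos {ρ : ℝ} (hρ : ρ ∈ Ioo (-1 : ℝ) 1) (p : ℝ × ℝ) :
    0 < biGaussDensity ρ p := by
  have : 0 < 1 - ρ ^ 2 := by nlinarith [hρ.1, hρ.2]
  unfold biGaussDensity
  positivity

theorem integral_biGaussDensity_pos (μ : Measure (ℝ × ℝ)) [IsFiniteMeasure μ] [NeZero μ]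
    {ρ : ℝ} (hρ : ρ ∈ Ioo (-1 : ℝ) 1) : 0 < ∫ p, biGaussDensity ρ p ∂μ := by
  have hbound : ∀ p,
      ‖biGaussDensity ρ p‖ ≤ (2 * Real.pi)⁻¹ * (√‖1 - (ρ : ℂ) ^ 2‖)⁻¹ := by
    intro p
    rw [← norm_real, ← complexBiGaussDensity_ofReal hρ]
    exact norm_complexBiGaussDensity_le (by simpa using hρ) p
  have hint : Integrable (biGaussDensity ρ) μ :=
    (integrable_const _).mono' (by unfold biGaussDensity; fun_prop) (ae_of_all _ hbound)
  rw [integral_pos_iff_support_of_nonneg (fun p => (biGaussDensity_pos hρ p).le) hint,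
    Function.support_eq_univ fun p => (biGaussDensity_pos hρ p).ne']
  exact Measure.measure_univ_pos.2 (NeZero.ne μ)

theorem AnalyticOnNhd.eqOn_const_of_eventually_eq_ofReal {E : Type*} [NormedAddCommGroup E]
    [NormedSpace ℂ E] {f : ℂ → E} {U : Set ℂ} {c : ℝ} (hf : AnalyticOnNhd ℂ f U)
    (hU : IsPreconnected U) (hc : (c : ℂ) ∈ U) (h : ∀ᶠ x : ℝ in 𝓝 c, f x = f c) :
    EqOn f (fun _ => f c) U := by
  have hreal : Tendsto ((↑) : ℝ → ℂ) (𝓝[≠] c) (𝓝[≠] (c : ℂ)) :=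
    continuous_ofReal.continuousWithinAt.tendsto_nhdsWithin fun x hx => ofReal_injective.ne hx
  exact hf.eqOn_of_preconnected_of_frequently_eq analyticOnNhd_const hU hc
    (hreal.frequently (h.filter_mono nhdsWithin_le_nhds).frequently)

theorem flatto_shepp_general (A : Set (ℝ × ℝ)) (hfin : volume A < ⊤)
    (hconst : ∀ ρ ρ' : ℝ, ρ ∈ Set.Ioo (-1 : ℝ) 1 → ρ' ∈ Set.Ioo (-1 : ℝ) 1 →
      ∫ p in A, biGaussDensity ρ p = ∫ p in A, biGaussDensity ρ' p) :
    volume A = 0 := by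
  have : IsFiniteMeasure (volume.restrict A) := ⟨by simpa using hfin⟩
  set F : ℂ → ℂ := fun z => ∫ p in A, complexBiGaussDensity z p
  have hF_real : ∀ ρ ∈ Ioo (-1 : ℝ) 1, F ρ = ↑(∫ p in A, biGaussDensity ρ p) :=
    fun ρ hρ =>
      (integral_congr_ae (ae_of_all _ (complexBiGaussDensity_ofReal hρ))).trans integral_ofReal
  have h₀ : (0 : ℝ) ∈ Ioo (-1 : ℝ) 1 := by norm_num
  have hF_eq : EqOn F (fun _ => F (0 : ℝ)) (re ⁻¹' Ioo (-1) 1) :=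
    (analyticOnNhd_integral_complexBiGaussDensity _).eqOn_const_of_eventually_eq_ofReal
      ((convex_Ioo (-1 : ℝ) 1).linear_preimage reLm).isPreconnected (by simp)
      (eventually_of_mem (Ioo_mem_nhds h₀.1 h₀.2) fun ρ hρ => show F ρ = F (0 : ℝ) by
        rw [hF_real ρ hρ, hF_real 0 h₀, hconst ρ 0 hρ h₀])
  have hF₀ : F (0 : ℝ) = 0 :=
    tendsto_nhds_unique
      (tendsto_const_nhds.congr fun t : ℝ => (hF_eq (x := t * I) (by simp)).symm)
      (tendsto_integral_complexBiGaussDensity_mul_I _)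
  by_contra hA
  have : NeZero (volume.restrict A) := ⟨by simpa using hA⟩
  have hpos := integral_biGaussDensity_pos (volume.restrict A) h₀
  rw [hF_real 0 h₀, ofReal_eq_zero] at hF₀
  exact hpos.ne' hF₀

/-- Flatto–Shepp. If `A ⊆ ℝ²` is measurable with finite Lebesgue measure and
`ρ ↦ ∬_A φ(x, y; ρ) dx dy` is constant on `(-1, 1)`, then `A` is Lebesgue-null. -/
theorem flatto_shepp (A : Set (ℝ × ℝ)) (hA : MeasurableSet A) (hfin : volume A < ⊤)
    (hconst : ∀ ρ ρ' : ℝ, ρ ∈ Set.Ioo (-1 : ℝ) 1 → ρ' ∈ Set.Ioo (-1 : ℝ) 1 →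
      ∫ p in A, biGaussDensity ρ p = ∫ p in A, biGaussDensity ρ' p) :
    volume A = 0 :=
  flatto_shepp_general A hfin hconst
end
end
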